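/- arXiv:2311.00148 — 2 statements merged into one kernel-verified Lean document; each statement's English description precedes it below -/
import Mathlib

section
/- Let R be a commutative ring and let λ, μ ∈ R be units. Then for all integers a ≥ 0 and n ≥ 0 one has W_μ^λ(a, n+1) = (λ^a·μ + λ^{−a}·μ⁻¹)·W_μ^λ(a, n) + W_μ^λ(a−1, n), where by convention W_μ^λ(−1, n) = 0. -/
/-! Split off the point `1`. If `1 ∈ E₀`, it precedes every element of `E`, so it multiplies
the weight of the remaining partition by `λ^a μ`; if `1 ∈ E₁`, by `λ^(-a) μ⁻¹`; if `1 ∈ E`,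
it forms no counted pair and only lowers `|E|` by one. -/

open Finset

noncomputable section

/-- `inv(f⁻¹(s), f⁻¹(t))` : the number of pairs `(i, j)` with `i < j`,
`i ∈ f⁻¹(s)` and `j ∈ f⁻¹(t)`. -/
def invP {n : ℕ} (f : Fin n → Fin 3) (s t : Fin 3) : ℕ :=
  ((Finset.univ : Finset (Fin n × Fin n)).filter
    (fun p => p.1 < p.2 ∧ f p.1 = s ∧ f p.2 = t)).card

/-- The cardinality of `f⁻¹(s)`. -/
def partSize {n : ℕ} (f : Fin n → Fin 3) (s : Fin 3) : ℕ :=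
  (Finset.univ.filter (fun i => f i = s)).card

/-- `W_μ^λ(a, n)`: the sum over ordered partitions `{1,…,n} = E₀ ⊔ E ⊔ E₁` (encoded as
functions `f : Fin n → Fin 3`, with `E₀ = f⁻¹(0)`, `E = f⁻¹(1)`, `E₁ = f⁻¹(2)`) with
`|E| = a`, of `λ^(inv(E₀,E) - inv(E₁,E)) · μ^(|E₀| - |E₁|)`.  It vanishes if `a < 0`
or `a > n`. -/
def W {R : Type*} [CommRing R] (lam mu : Rˣ) (a : ℤ) (n : ℕ) : R :=
  ∑ f ∈ (Finset.univ : Finset (Fin n → Fin 3)).filter (fun f => (partSize f 1 : ℤ) = a),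
    ((lam ^ ((invP f 0 1 : ℤ) - (invP f 2 1 : ℤ)) *
      mu ^ ((partSize f 0 : ℤ) - (partSize f 2 : ℤ)) : Rˣ) : R)

lemma partSize_cons {n : ℕ} (c : Fin 3) (g : Fin n → Fin 3) (s : Fin 3) :
    partSize (Fin.cons c g) s = (if c = s then 1 else 0) + partSize g s := by
  simp only [partSize, card_filter, Fin.sum_univ_succ, Fin.cons_zero, Fin.cons_succ]

lemma invP_cons {n : ℕ} (c : Fin 3) (g : Fin n → Fin 3) (s t : Fin 3) :
    invP (Fin.cons c g) s t = (if c = s then partSize g t else 0) + invP g s t := by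
  simp only [invP, partSize, card_filter, ← univ_product_univ, sum_product,
    Fin.sum_univ_succ, Fin.cons_zero, Fin.cons_succ, Fin.not_lt_zero,
    Fin.succ_pos, Fin.succ_lt_succ_iff, false_and, if_false, true_and, zero_add]
  split_ifs with h <;> simp [h]

section

variable {G : Type*} [CommGroup G] (lam mu : G)

def partitionWeight {n : ℕ} (f : Fin n → Fin 3) : G :=
  lam ^ ((invP f 0 1 : ℤ) - invP f 2 1) * mu ^ ((partSize f 0 : ℤ) - partSize f 2)

variable {n : ℕ} (g : Fin n → Fin 3)

lemma partitionWeight_cons_zero :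
    partitionWeight lam mu (Fin.cons 0 g) =
      lam ^ (partSize g 1 : ℤ) * mu * partitionWeight lam mu g := by
  simp [partitionWeight, invP_cons, partSize_cons, zpow_add, zpow_sub, mul_comm, mul_assoc,
    mul_left_comm]

lemma partitionWeight_cons_one :
    partitionWeight lam mu (Fin.cons 1 g) = partitionWeight lam mu g := by
  simp [partitionWeight, invP_cons, partSize_cons]

lemma partitionWeight_cons_two :
    partitionWeight lam mu (Fin.cons 2 g) =
      lam ^ (-(partSize g 1 : ℤ)) * mu⁻¹ * partitionWeight lam mu g := by
  simp [partitionWeight, invP_cons, partSize_cons, zpow_add, zpow_sub, mul_comm, mul_assoc,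
    mul_left_comm]

end

section

variable {R : Type*} [CommRing R] (lam mu : Rˣ) (a : ℤ) (n : ℕ)

lemma W_eq_sum_ite : W lam mu a n = ∑ f : Fin n → Fin 3,
    if (partSize f 1 : ℤ) = a then ((partitionWeight lam mu f : Rˣ) : R) else 0 :=
  sum_filter _ _

/-- The part of `W lam mu a (n + 1)` coming from partitions with the point `1` in block `c`. -/
def WCons (c : Fin 3) : R := ∑ g : Fin n → Fin 3,
  if (partSize (Fin.cons c g) 1 : ℤ) = a then ((partitionWeight lam mu (Fin.cons c g) : Rˣ) : R)
  else 0

lemma W_succ_eq_sum_WCons : W lam mu a (n + 1) = ∑ c : Fin 3, WCons lam mu a n c := by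
  rw [W_eq_sum_ite, ← (Fin.consEquiv fun _ => Fin 3).sum_comp, Fintype.sum_prod_type]
  rfl

lemma WCons_zero : WCons lam mu a n 0 = ((lam ^ a * mu : Rˣ) : R) * W lam mu a n := by
  rw [WCons, W_eq_sum_ite, mul_sum]
  refine sum_congr rfl fun g _ => ?_
  rw [partSize_cons, partitionWeight_cons_zero, if_neg (show (0 : Fin 3) ≠ 1 by decide),
    zero_add]
  split_ifs with h
  · rw [h, Units.val_mul]
  · rw [mul_zero]

lemma WCons_one : WCons lam mu a n 1 = W lam mu (a - 1) n := by
  rw [WCons, W_eq_sum_ite]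
  refine sum_congr rfl fun g _ => ?_
  rw [partSize_cons, partitionWeight_cons_one, if_pos rfl]
  congr 1
  push_cast
  exact propext (by omega)

lemma WCons_two : WCons lam mu a n 2 = ((lam ^ (-a) * mu⁻¹ : Rˣ) : R) * W lam mu a n := by
  rw [WCons, W_eq_sum_ite, mul_sum]
  refine sum_congr rfl fun g _ => ?_
  rw [partSize_cons, partitionWeight_cons_two, if_neg (show (2 : Fin 3) ≠ 1 by decide),
    zero_add]
  split_ifs with h
  · rw [h, Units.val_mul]
  · rw [mul_zero]

end

theorem stmt1_general {R : Type*} [CommRing R] (lam mu : Rˣ) (a : ℤ) (n : ℕ) :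
    W lam mu a (n + 1) =
      (((lam ^ a * mu : Rˣ) : R) + ((lam ^ (-a) * mu⁻¹ : Rˣ) : R)) * W lam mu a n
        + W lam mu (a - 1) n := by
  rw [W_succ_eq_sum_WCons, Fin.sum_univ_three, WCons_zero, WCons_one, WCons_two]
  ring

/-- For a commutative ring `R`, units `λ, μ ∈ Rˣ` and integers `a ≥ 0`, `n ≥ 0`,
`W_μ^λ(a, n+1) = (λ^a·μ + λ^{−a}·μ⁻¹)·W_μ^λ(a, n) + W_μ^λ(a−1, n)`. -/
theorem stmt1 {R : Type*} [CommRing R] (lam mu : Rˣ) (a : ℤ) (ha : 0 ≤ a) (n : ℕ) :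
    W lam mu a (n + 1) =
      (((lam ^ a * mu : Rˣ) : R) + ((lam ^ (-a) * mu⁻¹ : Rˣ) : R)) * W lam mu a n
        + W lam mu (a - 1) n :=
  stmt1_general lam mu a n
end
end

section
/- For all integers a, b ≥ 0, the identity Σ_{c=0}^{min(a,b)} (λ; λ²)_c · [a+b choose 2c, a−c, b−c]_λ · λ^{(a−c)(b−c)+c} = [a+b choose a]_{λ²} · (λ^a + λ^b)/(λ^{a+b} + 1) holds in ℚ(λ). -/
noncomputable section

/-- The field `ℚ(λ)` of rational functions. -/
abbrev K : Type := RatFunc ℚ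

/-- The indeterminate `λ`. -/
def Xq : K := RatFunc.X

/-- `(n)_t = ∏_{i=1}^n (t^i − 1)`. -/
def qfact (t : K) (n : ℕ) : K := ∏ i ∈ Finset.range n, (t ^ (i + 1) - 1)

/-- `(x; y)_n = ∏_{i=1}^n (1 − x·y^{i−1})`. -/
def qpoch (x y : K) (n : ℕ) : K := ∏ i ∈ Finset.range n, (1 - x * y ^ i)

/-- The Gaussian binomial `[n choose m]_t` (with value `0` out of range). -/
def qbinomN (t : K) (n m : ℕ) : K :=
  if m ≤ n then qfact t n / (qfact t m * qfact t (n - m)) else 0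

/-- The `t`-multinomial `[m₁+m₂+m₃ choose m₁, m₂, m₃]_t`. -/
def qmul3 (t : K) (m1 m2 m3 : ℕ) : K :=
  qfact t (m1 + m2 + m3) / (qfact t m1 * qfact t m2 * qfact t m3)

/-! Both sides, as functions `S a b`, are symmetric in `a, b`, equal `1` at `a = 0`,
and satisfy the recurrence `S (α+1) (β+1) = recX α β * S α (β+1) + recY α β * S α β` for `α ≤ β`,
which determines them. For the right-hand side this is a rational-function identity. For the sum
it is Zeilberger's creative telescoping: with `F c` the summand, `F c - recX * F' c - recY * F'' c`
equals `G (c+1) - G c` for the certificate `G c = (1 - λ^{2c}) / (λ^{2a} - 1) * F c`, so summing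
over `c` leaves only `G a = -F a`, the extra last term of the sum. -/

lemma qfact_zero (t : K) : qfact t 0 = 1 := by simp [qfact]

lemma qfact_succ (t : K) (n : ℕ) : qfact t (n + 1) = qfact t n * (t ^ (n + 1) - 1) :=
  Finset.prod_range_succ _ n

lemma qpoch_succ (x y : K) (n : ℕ) : qpoch x y (n + 1) = qpoch x y n * (1 - x * y ^ n) :=
  Finset.prod_range_succ _ n

lemma Xq_ne_zero : Xq ≠ 0 := RatFunc.X_ne_zero

lemma Xq_pow_sub_one_ne_zero {k : ℕ} (hk : k ≠ 0) : Xq ^ k - 1 ≠ 0 := by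
  have h := RatFunc.algebraMap_ne_zero
    (Polynomial.X_pow_sub_C_ne_zero (Nat.pos_of_ne_zero hk) (1 : ℚ))
  simpa [Xq, RatFunc.algebraMap_X] using h

lemma Xq_pow_add_Xq_pow_ne_zero (a b : ℕ) : Xq ^ a + Xq ^ b ≠ 0 := by
  have hp : (Polynomial.X ^ a + Polynomial.X ^ b : Polynomial ℚ) ≠ 0 := fun h => by
    simpa using congrArg (Polynomial.eval 1) h
  simpa [Xq, RatFunc.algebraMap_X] using RatFunc.algebraMap_ne_zero hp

lemma Xq_pow_add_one_ne_zero (k : ℕ) : Xq ^ k + 1 ≠ 0 := by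
  simpa using Xq_pow_add_Xq_pow_ne_zero k 0

lemma qfact_Xq_pow_ne_zero {k : ℕ} (hk : k ≠ 0) (n : ℕ) : qfact (Xq ^ k) n ≠ 0 :=
  Finset.prod_ne_zero_iff.mpr fun i _ => by
    rw [← pow_mul]; exact Xq_pow_sub_one_ne_zero (by positivity)

lemma qfact_Xq_ne_zero (n : ℕ) : qfact Xq n ≠ 0 := by
  simpa using qfact_Xq_pow_ne_zero one_ne_zero n

def lhsTerm (a b c : ℕ) : K :=
  qpoch Xq (Xq ^ 2) c * qmul3 Xq (2 * c) (a - c) (b - c) * Xq ^ ((a - c) * (b - c) + c)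

def lhs (a b : ℕ) : K := ∑ c ∈ Finset.range (min a b + 1), lhsTerm a b c

def rhs (a b : ℕ) : K := qbinomN (Xq ^ 2) (a + b) a * (Xq ^ a + Xq ^ b) / (Xq ^ (a + b) + 1)

lemma lhsTerm_comm (a b c : ℕ) : lhsTerm a b c = lhsTerm b a c := by
  simp only [lhsTerm, qmul3, Nat.mul_comm (a - c), Nat.add_right_comm _ (a - c)]
  ring

lemma lhsTerm_add_add (c i j : ℕ) :
    lhsTerm (c + i) (c + j) c = qpoch Xq (Xq ^ 2) c * qmul3 Xq (2 * c) i j * Xq ^ (i * j + c) := by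
  simp only [lhsTerm, Nat.add_sub_cancel_left]

lemma lhsTerm_succ_right (c i j : ℕ) :
    (Xq ^ (j + 1) - 1) * lhsTerm (c + i) (c + j + 1) c
      = Xq ^ i * (Xq ^ (2 * c + i + j + 1) - 1) * lhsTerm (c + i) (c + j) c := by
  rw [add_assoc c j, lhsTerm_add_add, lhsTerm_add_add, qmul3, qmul3, ← add_assoc, qfact_succ,
    qfact_succ]
  have hj : Xq ^ (j + 1) - 1 ≠ 0 := Xq_pow_sub_one_ne_zero (by omega)
  field_simp [qfact_Xq_ne_zero]
  ring

lemma lhsTerm_succ_left (c i j : ℕ) :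
    (Xq ^ (i + 1) - 1) * lhsTerm (c + i + 1) (c + j) c
      = Xq ^ j * (Xq ^ (2 * c + i + j + 1) - 1) * lhsTerm (c + i) (c + j) c := by
  rw [lhsTerm_comm, lhsTerm_succ_right, lhsTerm_comm, Nat.add_right_comm _ j]

lemma lhsTerm_succ_index (c i j : ℕ) :
    Xq ^ (i + j) * (Xq ^ (2 * c + 2) - 1) * lhsTerm (c + i + 1) (c + j + 1) (c + 1)
      = -((Xq ^ (i + 1) - 1) * (Xq ^ (j + 1) - 1)) * lhsTerm (c + i + 1) (c + j + 1) c := by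
  have hnext : lhsTerm (c + i + 1) (c + j + 1) (c + 1)
      = qpoch Xq (Xq ^ 2) (c + 1) * qmul3 Xq (2 * (c + 1)) i j * Xq ^ (i * j + (c + 1)) := by
    rw [Nat.add_right_comm c i, Nat.add_right_comm c j, lhsTerm_add_add]
  rw [hnext, show lhsTerm (c + i + 1) (c + j + 1) c = _ from lhsTerm_add_add c (i + 1) (j + 1),
    qmul3, qmul3, qpoch_succ, show 2 * (c + 1) + i + j = 2 * c + (i + 1) + (j + 1) by ring,
    show 2 * (c + 1) = 2 * c + 1 + 1 by ring, qfact_succ _ (2 * c + 1), qfact_succ _ (2 * c),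
    qfact_succ _ i, qfact_succ _ j]
  have h1 : Xq ^ (2 * c + 1) - 1 ≠ 0 := Xq_pow_sub_one_ne_zero (by omega)
  have h2 : Xq ^ (2 * c + 1 + 1) - 1 ≠ 0 := Xq_pow_sub_one_ne_zero (by omega)
  have hi : Xq ^ (i + 1) - 1 ≠ 0 := Xq_pow_sub_one_ne_zero (by omega)
  have hj : Xq ^ (j + 1) - 1 ≠ 0 := Xq_pow_sub_one_ne_zero (by omega)
  field_simp [qfact_Xq_ne_zero]
  ring

def recX (α β : ℕ) : K :=
  Xq ^ (β + 1) * (Xq ^ (α + 1) + Xq ^ (β + 1)) * (Xq ^ (α + β + 2) - 1) / (Xq ^ (2 * α + 2) - 1)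

def recY (α β : ℕ) : K :=
  -((Xq ^ (α + β + 2) + Xq ^ 2) * (Xq ^ (α + β + 2) - 1) * (Xq ^ (α + β + 2) - Xq))
    / (Xq ^ 2 * (Xq ^ (2 * α + 2) - 1))

def certificate (a b c : ℕ) : K := (1 - Xq ^ (2 * c)) / (Xq ^ (2 * a) - 1) * lhsTerm a b c

lemma lhsTerm_sub_rec_eq_certificate_sub (c i j : ℕ) :
    lhsTerm (c + i + 1) (c + j + 1) c - recX (c + i) (c + j) * lhsTerm (c + i) (c + j + 1) c
        - recY (c + i) (c + j) * lhsTerm (c + i) (c + j) c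
      = certificate (c + i + 1) (c + j + 1) (c + 1) - certificate (c + i + 1) (c + j + 1) c := by
  have hX := Xq_ne_zero
  have hi : Xq ^ (i + 1) - 1 ≠ 0 := Xq_pow_sub_one_ne_zero (by omega)
  have hj : Xq ^ (j + 1) - 1 ≠ 0 := Xq_pow_sub_one_ne_zero (by omega)
  have hc : Xq ^ (2 * c + 2) - 1 ≠ 0 := Xq_pow_sub_one_ne_zero (by omega)
  have ha : Xq ^ (2 * (c + i + 1)) - 1 ≠ 0 := Xq_pow_sub_one_ne_zero (by omega)
  have ha' : Xq ^ (2 * (c + i) + 2) - 1 ≠ 0 := Xq_pow_sub_one_ne_zero (by omega)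
  have hF2 : lhsTerm (c + i) (c + j + 1) c
      = Xq ^ i * (Xq ^ (2 * c + i + j + 1) - 1) / (Xq ^ (j + 1) - 1)
        * lhsTerm (c + i) (c + j) c := by
    rw [div_mul_eq_mul_div, eq_div_iff hj, mul_comm, lhsTerm_succ_right]
  have hF1 : lhsTerm (c + i + 1) (c + j + 1) c
      = Xq ^ (j + 1) * (Xq ^ (2 * c + i + j + 2) - 1) / (Xq ^ (i + 1) - 1)
        * lhsTerm (c + i) (c + j + 1) c := by
    have h := lhsTerm_succ_left c i (j + 1)
    simp only [← add_assoc] at h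
    rw [div_mul_eq_mul_div, eq_div_iff hi, mul_comm, h]
  have hF4 : lhsTerm (c + i + 1) (c + j + 1) (c + 1)
      = -((Xq ^ (i + 1) - 1) * (Xq ^ (j + 1) - 1)) / (Xq ^ (i + j) * (Xq ^ (2 * c + 2) - 1))
        * lhsTerm (c + i + 1) (c + j + 1) c := by
    rw [div_mul_eq_mul_div, eq_div_iff (mul_ne_zero (pow_ne_zero _ hX) hc), mul_comm,
      lhsTerm_succ_index]
  simp only [certificate, recX, recY]
  rw [hF4, hF1, hF2]
  field_simp
  ring

lemma lhs_succ_succ {α β : ℕ} (h : α ≤ β) :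
    lhs (α + 1) (β + 1) = recX α β * lhs α (β + 1) + recY α β * lhs α β := by
  have htel : ∑ c ∈ Finset.range (α + 1), (lhsTerm (α + 1) (β + 1) c
        - recX α β * lhsTerm α (β + 1) c - recY α β * lhsTerm α β c)
      = certificate (α + 1) (β + 1) (α + 1) - certificate (α + 1) (β + 1) 0 := by
    rw [← Finset.sum_range_sub]
    refine Finset.sum_congr rfl fun c hc => ?_
    obtain ⟨i, rfl⟩ := Nat.exists_eq_add_of_le (Nat.lt_succ_iff.mp (Finset.mem_range.mp hc))
    obtain ⟨j, rfl⟩ := Nat.exists_eq_add_of_le ((Nat.le_add_right c i).trans h)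
    exact lhsTerm_sub_rec_eq_certificate_sub c i j
  have hlast : certificate (α + 1) (β + 1) (α + 1) = -lhsTerm (α + 1) (β + 1) (α + 1) := by
    have ha : Xq ^ (2 * (α + 1)) - 1 ≠ 0 := Xq_pow_sub_one_ne_zero (by omega)
    rw [certificate, ← neg_sub, neg_div, div_self ha, neg_one_mul]
  have hfirst : certificate (α + 1) (β + 1) 0 = 0 := by simp [certificate]
  rw [hlast, hfirst, Finset.sum_sub_distrib, Finset.sum_sub_distrib, ← Finset.mul_sum,
    ← Finset.mul_sum] at htel
  simp only [lhs, Nat.min_eq_left h, Nat.min_eq_left (Nat.le_succ_of_le h),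
    Nat.min_eq_left (Nat.succ_le_succ h), Finset.sum_range_succ _ (α + 1)]
  linear_combination htel

lemma qbinomN_succ_right (t : K) (m n : ℕ) (h : qfact t (n + 1) ≠ 0) :
    qbinomN t (m + n + 1) m = (t ^ (m + n + 1) - 1) / (t ^ (n + 1) - 1) * qbinomN t (m + n) m := by
  rw [qfact_succ, mul_ne_zero_iff] at h
  simp only [qbinomN, if_pos (Nat.le_add_right m _), if_pos (by omega : m ≤ m + n + 1),
    show m + n + 1 - m = n + 1 by omega, Nat.add_sub_cancel_left, qfact_succ]
  field_simp [h.1, h.2]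

lemma qbinomN_succ_succ (t : K) (m n : ℕ) (h : qfact t (m + 1) ≠ 0) :
    qbinomN t (m + n + 1) (m + 1)
      = (t ^ (m + n + 1) - 1) / (t ^ (m + 1) - 1) * qbinomN t (m + n) m := by
  rw [qfact_succ, mul_ne_zero_iff] at h
  simp only [qbinomN, if_pos (Nat.le_add_right m _), if_pos (by omega : m + 1 ≤ m + n + 1),
    show m + n + 1 - (m + 1) = n by omega, Nat.add_sub_cancel_left, qfact_succ]
  field_simp [h.1, h.2]

lemma rhs_succ_succ (α β : ℕ) :
    rhs (α + 1) (β + 1) = recX α β * rhs α (β + 1) + recY α β * rhs α β := by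
  have hq : ∀ n, qfact (Xq ^ 2) n ≠ 0 := qfact_Xq_pow_ne_zero two_ne_zero
  have hB1 := qbinomN_succ_right (Xq ^ 2) α β (hq _)
  have hB2 := qbinomN_succ_succ (Xq ^ 2) α (β + 1) (hq _)
  have hX := Xq_ne_zero
  have ha : (Xq ^ 2) ^ (α + 1) - 1 ≠ 0 := by
    rw [← pow_mul]; exact Xq_pow_sub_one_ne_zero (by omega)
  have hb : (Xq ^ 2) ^ (β + 1) - 1 ≠ 0 := by
    rw [← pow_mul]; exact Xq_pow_sub_one_ne_zero (by omega)
  have ha' : Xq ^ (2 * α + 2) - 1 ≠ 0 := Xq_pow_sub_one_ne_zero (by omega)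
  have h0 := Xq_pow_add_one_ne_zero (α + β)
  have h1 := Xq_pow_add_one_ne_zero (α + β + 1)
  have h2 := Xq_pow_add_one_ne_zero (α + β + 1 + 1)
  rw [rhs, rhs, rhs, show α + 1 + (β + 1) = α + (β + 1) + 1 by ring, hB2, ← add_assoc, hB1]
  simp only [recX, recY]
  field_simp
  ring

lemma lhs_zero_left (b : ℕ) : lhs 0 b = 1 := by
  simp [lhs, lhsTerm, qmul3, qpoch, qfact_zero, div_self (qfact_Xq_ne_zero b)]

lemma rhs_zero_left (b : ℕ) : rhs 0 b = 1 := by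
  simp [rhs, qbinomN, qfact_zero, div_self (qfact_Xq_pow_ne_zero two_ne_zero b),
    add_comm (1 : K), div_self (Xq_pow_add_one_ne_zero b)]

lemma lhs_comm (a b : ℕ) : lhs a b = lhs b a := by
  simp only [lhs, min_comm a b, lhsTerm_comm a b]

lemma rhs_comm (a b : ℕ) : rhs a b = rhs b a := by
  rw [rhs, rhs, qbinomN, qbinomN, if_pos (Nat.le_add_right a b),
    if_pos (Nat.le_add_right b a), Nat.add_sub_cancel_left, Nat.add_sub_cancel_left, add_comm b a]
  ring

def SolvesRecurrence (f : ℕ → ℕ → K) : Prop :=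
  ∀ ⦃α β : ℕ⦄, α ≤ β → f (α + 1) (β + 1) = recX α β * f α (β + 1) + recY α β * f α β

lemma SolvesRecurrence.eq {f g : ℕ → ℕ → K} (hf : SolvesRecurrence f) (hg : SolvesRecurrence g)
    (h0 : ∀ b, f 0 b = g 0 b) : ∀ a b, a ≤ b → f a b = g a b := by
  intro a
  induction a with
  | zero => exact fun b _ => h0 b
  | succ α ih =>
    intro b hb
    obtain ⟨β, rfl⟩ : ∃ β, b = β + 1 := ⟨b - 1, by omega⟩
    rw [hf (by omega), hg (by omega), ih _ (by omega), ih _ (by omega)]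

/-- For integers `a, b ≥ 0`,
`Σ_{c=0}^{min(a,b)} (λ; λ²)_c · [a+b choose 2c, a−c, b−c]_λ · λ^{(a−c)(b−c)+c}
  = [a+b choose a]_{λ²} · (λ^a + λ^b)/(λ^{a+b} + 1)` in `ℚ(λ)`. -/
theorem stmt3 (a b : ℕ) :
    ∑ c ∈ Finset.range (min a b + 1),
      qpoch Xq (Xq ^ 2) c * qmul3 Xq (2 * c) (a - c) (b - c) * Xq ^ ((a - c) * (b - c) + c)
    = qbinomN (Xq ^ 2) (a + b) a * (Xq ^ a + Xq ^ b) / (Xq ^ (a + b) + 1) := by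
  show lhs a b = rhs a b
  have hle : ∀ a b, a ≤ b → lhs a b = rhs a b :=
    SolvesRecurrence.eq (fun _ _ h => lhs_succ_succ h) (fun α β _ => rhs_succ_succ α β)
      (fun b => by rw [lhs_zero_left, rhs_zero_left])
  rcases le_total a b with h | h
  · exact hle a b h
  · rw [lhs_comm, rhs_comm]
    exact hle b a h
end
end
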